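/- arXiv:2503.00879 — 3 statements merged into one kernel-verified Lean document; each statement's English description precedes it below -/
import Mathlib

section
/- Let J ⊊ b' be an ideal of the Borel subalgebra b contained in the derived algebra, with root set R_J (so J = ⊕_{α∈R_J} g_α). Then the image of C·X_α in b/J generates a 1-dimensional ideal of b/J contained in b'/J if and only if α ∈ R⁺ \ R_J and for every simple root a, either a + α is not a root or a + α ∈ R_J. -/
/-!
`ℂ ∙ [X_i]` is an ideal of `b ⧸ J` iff `⁅y, X_i⁆ ∈ J + ℂ X_i` for every `y ∈ b`. Taking
`y = X_s` and using the linear independence of the root vectors gives the root condition. Conversely,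
the `y` with `⁅y, J + ℂ X_i⁆ ⊆ J + ℂ X_i` form a Lie subalgebra containing `H` and the simple root
vectors, and these generate `b` because splitting off simple roots `α_j = α_s + α_j'` cannot cycle.
A cycle `α_m = α_{s₁} + ⋯ + α_{sₙ} + α_m` would make `X_m` an eigenvector of
`ad X_{s₁} ⋯ ad X_{sₙ}` with nonzero eigenvalue. By the Jacobi identity, a factor may be moved past
a neighbour it commutes with, and two factors whose roots add up to a root may be merged; this
shortens the cycle until its first factor commutes with all the others, and then the product is
nilpotent because each `ad X_s` is.
-/

open LieAlgebra Filter

section LieAlgebraFacts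

variable {R L : Type*} [CommRing R] [LieRing L] [LieAlgebra R L]

def Submodule.lieNormalizer (W : Submodule R L) : LieSubalgebra R L where
  carrier := {x | ∀ w ∈ W, ⁅x, w⁆ ∈ W}
  add_mem' hx hy w hw := by rw [add_lie]; exact W.add_mem (hx w hw) (hy w hw)
  zero_mem' w _ := by rw [zero_lie]; exact W.zero_mem
  smul_mem' c x hx w hw := by rw [smul_lie]; exact W.smul_mem c (hx w hw)
  lie_mem' hx hy w hw := by rw [lie_lie]; exact W.sub_mem (hx _ (hy w hw)) (hy _ (hx w hw))

theorem mem_lieNormalizer_sup_span_singleton (J : LieIdeal R L) {x v : L}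
    (h : ⁅x, v⁆ ∈ (J : Submodule R L) ⊔ R ∙ v) :
    x ∈ ((J : Submodule R L) ⊔ R ∙ v).lieNormalizer := by
  intro w hw
  obtain ⟨u, hu, _, hv, rfl⟩ := Submodule.mem_sup.1 hw
  obtain ⟨a, rfl⟩ := Submodule.mem_span_singleton.1 hv
  rw [lie_add, lie_smul]
  exact add_mem (Submodule.mem_sup_left (J.lie_mem hu)) (Submodule.smul_mem _ a h)

theorem exists_lieIdeal_eq_span_singleton_iff (v : L) :
    (∃ I : LieIdeal R L, (I : Submodule R L) = R ∙ v) ↔ ∀ x : L, ⁅x, v⁆ ∈ R ∙ v := by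
  constructor
  · rintro ⟨I, hI⟩ x
    have hv : v ∈ (I : Submodule R L) := hI ▸ Submodule.mem_span_singleton_self v
    rw [← hI]
    exact I.lie_mem hv
  · intro h
    refine ⟨{ toSubmodule := R ∙ v, lie_mem := fun {x w} hw => ?_ }, rfl⟩
    obtain ⟨c, rfl⟩ := Submodule.mem_span_singleton.mp hw
    rw [lie_smul]
    exact Submodule.smul_mem _ c (h x)

theorem LieSubmodule.Quotient.mk'_mem_span_singleton_iff (J : LieIdeal R L) (x y : L) :
    LieSubmodule.Quotient.mk' J x ∈ R ∙ LieSubmodule.Quotient.mk' J y ↔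
      x ∈ (J : Submodule R L) ⊔ R ∙ y := by
  rw [← Submodule.comap_map_mkQ, Submodule.map_span, Set.image_singleton]
  rfl

theorem exists_lieIdeal_eq_span_mk'_iff (J : LieIdeal R L) (x : L) :
    (∃ I : LieIdeal R (L ⧸ J), (I : Submodule R (L ⧸ J)) = R ∙ LieSubmodule.Quotient.mk' J x) ↔
      ∀ y : L, ⁅y, x⁆ ∈ (J : Submodule R L) ⊔ R ∙ x := by
  rw [exists_lieIdeal_eq_span_singleton_iff, (LieSubmodule.Quotient.surjective_mk' J).forall]
  refine forall_congr' fun y => ?_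
  rw [← LieSubmodule.Quotient.mk'_mem_span_singleton_iff]
  rfl

theorem commute_ad_of_lie_eq_zero {x y : L} (h : ⁅x, y⁆ = 0) : Commute (ad R L x) (ad R L y) :=
  LinearMap.ext fun z => by
    rw [Module.End.mul_apply, Module.End.mul_apply, ad_apply, ad_apply, ad_apply, ad_apply,
      leibniz_lie, h, zero_lie, zero_add]

end LieAlgebraFacts

theorem finrank_span_singleton_eq_one_iff {K V : Type*} [DivisionRing K] [AddCommGroup V]
    [Module K V] {v : V} : Module.finrank K (K ∙ v) = 1 ↔ v ≠ 0 :=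
  ⟨fun h hv => by
    rw [hv, Submodule.span_singleton_eq_bot.2 rfl, finrank_bot] at h
    exact zero_ne_one h, finrank_span_singleton⟩

theorem LinearIndependent.apply_mem_span_image_iff {R M ι : Type*} [Ring R] [Nontrivial R]
    [AddCommGroup M] [Module R M] {v : ι → M} (hv : LinearIndependent R v) {s : Set ι} {k : ι} :
    v k ∈ Submodule.span R (v '' s) ↔ k ∈ s :=
  ⟨fun h => by_contra fun hk => hv.notMem_span_image hk h,
    fun h => Submodule.subset_span (Set.mem_image_of_mem v h)⟩

section RootChains

variable {K L ι V : Type*} [Field K] [LieRing L] [LieAlgebra K L] [AddCommGroup V]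

def RootChain (α : ι → V) : ι → List ι → ι → Prop
  | m, [], m' => m = m'
  | m, s :: l, m' => ∃ m₁, α m = α s + α m₁ ∧ RootChain α m₁ l m'

def RootStep (α : ι → V) (j' j : ι) : Prop :=
  ∃ s, α j = α s + α j'

section RootVectors

variable {α : ι → V} {X : ι → L}

theorem RootChain.exists_prod_ad_apply_eq_smul
    (hXX : ∀ i j k, α k = α i + α j → ∃ c : K, c ≠ 0 ∧ ⁅X i, X j⁆ = c • X k) :
    ∀ {l : List ι} {m m' : ι}, RootChain α m l m' →
      ∃ c : K, c ≠ 0 ∧ (l.map fun s => ad K L (X s)).prod (X m') = c • X m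
  | [], _, _, rfl => ⟨1, one_ne_zero, by simp⟩
  | s :: _, m, _, ⟨m₁, hm, hc⟩ => by
    obtain ⟨c, hc0, he⟩ := exists_prod_ad_apply_eq_smul hXX hc
    obtain ⟨d, hd0, hb⟩ := hXX s m₁ m hm
    refine ⟨c * d, mul_ne_zero hc0 hd0, ?_⟩
    rw [List.map_cons, List.prod_cons, Module.End.mul_apply, he, map_smul, ad_apply, hb,
      smul_smul]

theorem RootChain.swap (hXne : ∀ i, X i ≠ 0)
    (hXX : ∀ i j k, α k = α i + α j → ∃ c : K, c ≠ 0 ∧ ⁅X i, X j⁆ = c • X k)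
    (hXX0 : ∀ i j, (¬∃ k, α k = α i + α j) → ⁅X i, X j⁆ = 0)
    {s t m m' : ι} {l : List ι} (hst : ⁅X s, X t⁆ = 0) :
    RootChain α m (s :: t :: l) m' → RootChain α m (t :: s :: l) m' := by
  rintro ⟨m₁, hm, m₂, hm₁, hc⟩
  obtain ⟨c, hc0, hb⟩ := hXX t m₂ m₁ hm₁
  obtain ⟨d, hd0, hb'⟩ := hXX s m₁ m hm
  have hJacobi : ⁅X t, ⁅X s, X m₂⁆⁆ = (c * d) • X m := by
    have h := leibniz_lie (X s) (X t) (X m₂)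
    rw [hst, zero_lie, zero_add, hb, lie_smul, hb', smul_smul] at h
    exact h.symm
  have hsm₂ : ∃ u, α u = α s + α m₂ := by
    by_contra h
    rw [hXX0 s m₂ h, lie_zero, eq_comm, smul_eq_zero] at hJacobi
    exact hJacobi.elim (mul_ne_zero hc0 hd0) (hXne m)
  obtain ⟨u, hu⟩ := hsm₂
  exact ⟨u, by rw [hm, hm₁, hu]; abel, m₂, hu, hc⟩

theorem RootChain.exists_merge (hXne : ∀ i, X i ≠ 0)
    (hXX : ∀ i j k, α k = α i + α j → ∃ c : K, c ≠ 0 ∧ ⁅X i, X j⁆ = c • X k)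
    (hXX0 : ∀ i j, (¬∃ k, α k = α i + α j) → ⁅X i, X j⁆ = 0) {s t : ι}
    (hst : ∃ u, α u = α s + α t) :
    ∀ {l : List ι} {m m' : ι}, t ∈ l → RootChain α m (s :: l) m' →
      ∃ l' : List ι, l'.length = l.length ∧ RootChain α m l' m'
  | t₀ :: l, m, m', ht, hc => by
    by_cases hst₀ : ∃ u, α u = α s + α t₀
    · obtain ⟨u, hu⟩ := hst₀
      obtain ⟨m₁, hm, m₂, hm₁, hc⟩ := hc
      exact ⟨u :: l, rfl, m₂, by rw [hm, hm₁, hu]; abel, hc⟩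
    · have ht : t ∈ l := (List.mem_cons.mp ht).resolve_left
        (by rintro rfl; exact hst₀ hst)
      obtain ⟨m₁, hm, hc⟩ := hc.swap hXne hXX hXX0 (hXX0 s t₀ hst₀)
      obtain ⟨l', hl', hc'⟩ := exists_merge hXne hXX hXX0 hst ht hc
      exact ⟨t₀ :: l', by simp [hl'], m₁, hm, hc'⟩

theorem pow_ad_apply_eq_zero_or_exists
    (hXX : ∀ i j k, α k = α i + α j → ∃ c : K, c ≠ 0 ∧ ⁅X i, X j⁆ = c • X k)
    (hXX0 : ∀ i j, (¬∃ k, α k = α i + α j) → ⁅X i, X j⁆ = 0) (s k : ι) :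
    ∀ n : ℕ, (ad K L (X s) ^ n) (X k) = 0 ∨
      ∃ m, α m = α k + n • α s ∧ ∃ c : K, (ad K L (X s) ^ n) (X k) = c • X m
  | 0 => Or.inr ⟨k, by simp, 1, by simp⟩
  | n + 1 => by
    rw [pow_succ', Module.End.mul_apply]
    obtain h | ⟨m, hm, c, he⟩ := pow_ad_apply_eq_zero_or_exists hXX hXX0 s k n
    · exact Or.inl (by rw [h, map_zero])
    by_cases hsm : ∃ u, α u = α s + α m
    · obtain ⟨u, hu⟩ := hsm
      obtain ⟨d, -, hb⟩ := hXX s m u hu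
      exact Or.inr ⟨u, by rw [hu, hm, succ_nsmul]; abel, c * d,
        by rw [he, map_smul, ad_apply, hb, smul_smul]⟩
    · exact Or.inl (by rw [he, map_smul, ad_apply, hXX0 s m hsm, smul_zero])

theorem eventually_pow_ad_apply_eq_zero [Finite ι] [CharZero K] [Module K V]
    (hαne : ∀ i, α i ≠ 0)
    (hXX : ∀ i j k, α k = α i + α j → ∃ c : K, c ≠ 0 ∧ ⁅X i, X j⁆ = c • X k)
    (hXX0 : ∀ i j, (¬∃ k, α k = α i + α j) → ⁅X i, X j⁆ = 0) (s k : ι) :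
    ∀ᶠ n in atTop, (ad K L (X s) ^ n) (X k) = 0 := by
  -- otherwise `α k + n • α s` would be a root for every `n`
  obtain ⟨n, hn⟩ : ∃ n : ℕ, (ad K L (X s) ^ n) (X k) = 0 := by
    by_contra! hne
    choose m hm using fun n =>
      (pow_ad_apply_eq_zero_or_exists hXX hXX0 s k n).resolve_left (hne n)
    refine not_injective_infinite_finite m fun n n' h => ?_
    have h : (n : K) • α s = (n' : K) • α s := by
      rw [Nat.cast_smul_eq_nsmul, Nat.cast_smul_eq_nsmul, ← add_right_inj (α k), ← (hm n).1,
        ← (hm n').1, h]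
    exact_mod_cast smul_left_injective K (hαne s) h
  filter_upwards [eventually_ge_atTop n] with n' hn'
  rw [← Nat.sub_add_cancel hn', pow_add, Module.End.mul_apply, hn, map_zero]

theorem RootChain.not_self (hXne : ∀ i, X i ≠ 0)
    (hXX : ∀ i j k, α k = α i + α j → ∃ c : K, c ≠ 0 ∧ ⁅X i, X j⁆ = c • X k)
    (hXX0 : ∀ i j, (¬∃ k, α k = α i + α j) → ⁅X i, X j⁆ = 0)
    (hnil : ∀ s, IsNilpotent (ad K L (X s))) :
    ∀ {l : List ι} {m : ι}, l ≠ [] → ¬RootChain α m l m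
  | s :: l, m, _, hc => by
    by_cases hmerge : ∃ t ∈ l, ∃ u, α u = α s + α t
    · obtain ⟨t, ht, hst⟩ := hmerge
      obtain ⟨l', hl', hc'⟩ := hc.exists_merge hXne hXX hXX0 hst ht
      have : l'.length < (s :: l).length := by simp [hl']
      exact not_self hXne hXX hXX0 hnil
        (List.ne_nil_of_length_pos (hl' ▸ List.length_pos_of_mem ht)) hc'
    · push Not at hmerge
      have hcomm : Commute (ad K L (X s)) (l.map fun t => ad K L (X t)).prod :=
        Commute.list_prod_right _ _ fun A hA => by
          obtain ⟨t, ht, rfl⟩ := List.mem_map.mp hA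
          exact commute_ad_of_lie_eq_zero (hXX0 s t fun ⟨u, hu⟩ => hmerge t ht u hu)
      obtain ⟨c, hc0, he⟩ := hc.exists_prod_ad_apply_eq_smul hXX
      rw [List.map_cons, List.prod_cons] at he
      have hev : Module.End.HasEigenvalue _ c :=
        Module.End.hasEigenvalue_of_hasEigenvector ⟨Module.End.mem_eigenspace_iff.2 he, hXne m⟩
      exact hc0 (hev.isNilpotent_of_isNilpotent (hcomm.isNilpotent_mul_right (hnil s))).eq_zero
termination_by l => l.length

theorem RootChain.exists_of_transGen {j j' : ι}
    (h : Relation.TransGen (RootStep α) j' j) :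
    ∃ l ≠ [], RootChain α j l j' := by
  induction h with
  | single h =>
    obtain ⟨s, hs⟩ := h
    exact ⟨[s], List.cons_ne_nil _ _, _, hs, rfl⟩
  | tail _ h ih =>
    obtain ⟨s, hs⟩ := h
    obtain ⟨l, -, hc⟩ := ih
    exact ⟨s :: l, List.cons_ne_nil _ _, _, hs, hc⟩

theorem wellFounded_of_not_rootChain_self [Finite ι]
    (h : ∀ {l : List ι} {m : ι}, l ≠ [] → ¬RootChain α m l m) :
    WellFounded (RootStep α) := by
  have : Std.Irrefl (Relation.TransGen (RootStep α)) :=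
    ⟨fun j hj => by
      obtain ⟨l, hl, hc⟩ := RootChain.exists_of_transGen hj
      exact h hl hc⟩
  exact (Finite.wellFounded_of_trans_of_irrefl (Relation.TransGen (RootStep α))).mono
    fun _ _ => Relation.TransGen.single

theorem mem_of_forall_simple_mem {S : Set ι}
    (hwf : WellFounded (RootStep α))
    (hGen : ∀ j ∉ S, ∃ s ∈ S, ∃ j', α j = α s + α j')
    (hXX : ∀ i j k, α k = α i + α j → ∃ c : K, c ≠ 0 ∧ ⁅X i, X j⁆ = c • X k)
    (M : LieSubalgebra K L) (hM : ∀ s ∈ S, X s ∈ M) (j : ι) : X j ∈ M := by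
  induction j using hwf.induction with
  | _ j ih =>
  by_cases hj : j ∈ S
  · exact hM j hj
  obtain ⟨s, hs, j', hj'⟩ := hGen j hj
  obtain ⟨c, hc, hb⟩ := hXX s j' j hj'
  rw [← inv_smul_smul₀ hc (X j), ← hb]
  exact M.smul_mem _ (M.lie_mem (hM s hs) (ih j' ⟨s, hj'⟩))

end RootVectors

theorem isNilpotent_ad_of_root_decomposition [Fintype ι] [CharZero K] (H : LieSubalgebra K L)
    {α : ι → (H →ₗ[K] K)} {X : ι → L} (hαne : ∀ i, α i ≠ 0)
    (hroot : ∀ (h : H) (i : ι), ⁅(h : L), X i⁆ = α i h • X i)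
    (hSpan : ∀ x : L, ∃ (h : H) (c : ι → K), x = (h : L) + ∑ i, c i • X i)
    (hXX : ∀ i j k, α k = α i + α j → ∃ c : K, c ≠ 0 ∧ ⁅X i, X j⁆ = c • X k)
    (hXX0 : ∀ i j, (¬∃ k, α k = α i + α j) → ⁅X i, X j⁆ = 0) (s : ι) :
    IsNilpotent (ad K L (X s)) := by
  obtain ⟨N, hN⟩ := eventually_atTop.1
    (eventually_all.2 (eventually_pow_ad_apply_eq_zero hαne hXX hXX0 s))
  refine ⟨N + 1, LinearMap.ext fun x => ?_⟩
  obtain ⟨h, c, rfl⟩ := hSpan x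
  have hh : ad K L (X s) h = -α s h • X s := by rw [ad_apply, ← lie_skew, hroot, neg_smul]
  have hH : (ad K L (X s) ^ (N + 1)) h = 0 := by
    rw [pow_succ, Module.End.mul_apply, hh, map_smul, hN N le_rfl, smul_zero]
  simp [hH, hN (N + 1) N.le_succ]

theorem root_condition_of_lie_mem {α : ι → V} {X : ι → L} {J : LieIdeal K L} {RJ : Set ι}
    (hli : LinearIndependent K X) (hJ : (J : Submodule K L) = Submodule.span K (X '' RJ))
    (hαne : ∀ i, α i ≠ 0)
    (hXX : ∀ i j k, α k = α i + α j → ∃ c : K, c ≠ 0 ∧ ⁅X i, X j⁆ = c • X k) {s i : ι}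
    (h : ⁅X s, X i⁆ ∈ (J : Submodule K L) ⊔ K ∙ X i) :
    (¬∃ k, α k = α s + α i) ∨ ∃ k ∈ RJ, α k = α s + α i := by
  refine or_iff_not_imp_left.2 fun hk => ?_
  obtain ⟨k, hk⟩ := not_not.1 hk
  obtain ⟨c, hc, hb⟩ := hXX s i k hk
  rw [hb, Submodule.smul_mem_iff _ hc, hJ, sup_comm, ← Submodule.span_insert,
    ← Set.image_insert_eq, hli.apply_mem_span_image_iff] at h
  obtain rfl | hkRJ := h
  · exact absurd (right_eq_add.1 hk) (hαne s)
  · exact ⟨k, hkRJ, hk⟩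

theorem lie_mem_of_root_condition [Fintype ι] (H : LieSubalgebra K L) {α : ι → (H →ₗ[K] K)}
    {X : ι → L} {S : Set ι} (hroot : ∀ (h : H) (i : ι), ⁅(h : L), X i⁆ = α i h • X i)
    (hSpan : ∀ x : L, ∃ (h : H) (c : ι → K), x = (h : L) + ∑ i, c i • X i)
    (hXX : ∀ i j k, α k = α i + α j → ∃ c : K, c ≠ 0 ∧ ⁅X i, X j⁆ = c • X k)
    (hXX0 : ∀ i j, (¬∃ k, α k = α i + α j) → ⁅X i, X j⁆ = 0)
    (hwf : WellFounded (RootStep α)) (hGen : ∀ j ∉ S, ∃ s ∈ S, ∃ j', α j = α s + α j')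
    {J : LieIdeal K L} {RJ : Set ι} (hRJ : ∀ k ∈ RJ, X k ∈ (J : Submodule K L)) {i : ι}
    (hi : ∀ s ∈ S, (¬∃ k, α k = α s + α i) ∨ ∃ k ∈ RJ, α k = α s + α i) (y : L) :
    ⁅y, X i⁆ ∈ (J : Submodule K L) ⊔ K ∙ X i := by
  have hXi : X i ∈ (J : Submodule K L) ⊔ K ∙ X i :=
    Submodule.mem_sup_right (Submodule.mem_span_singleton_self _)
  have hH (h : H) : (h : L) ∈ ((J : Submodule K L) ⊔ K ∙ X i).lieNormalizer :=
    mem_lieNormalizer_sup_span_singleton J (by rw [hroot]; exact Submodule.smul_mem _ _ hXi)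
  have hS : ∀ s ∈ S, X s ∈ ((J : Submodule K L) ⊔ K ∙ X i).lieNormalizer := by
    refine fun s hs => mem_lieNormalizer_sup_span_singleton J (Submodule.mem_sup_left ?_)
    rcases hi s hs with hsi | ⟨k, hk, hsk⟩
    · rw [hXX0 s i hsi]
      exact zero_mem _
    · obtain ⟨c, -, hb⟩ := hXX s i k hsk
      rw [hb]
      exact Submodule.smul_mem _ c (hRJ k hk)
  obtain ⟨h, c, rfl⟩ := hSpan y
  have hy : (h : L) + ∑ j, c j • X j ∈ ((J : Submodule K L) ⊔ K ∙ X i).lieNormalizer :=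
    add_mem (hH h) (sum_mem fun j _ => LieSubalgebra.smul_mem _ (c j)
      (mem_of_forall_simple_mem hwf hGen hXX _ hS j))
  exact hy _ hXi

end RootChains

theorem one_dimensional_ideal_of_quotient_iff_general
    {b : Type*} [LieRing b] [LieAlgebra ℂ b] (H : LieSubalgebra ℂ b)
    {ι : Type*} [Fintype ι] (α : ι → (H →ₗ[ℂ] ℂ)) (X : ι → b)
    (S : Set ι)
    (hXne : ∀ i, X i ≠ 0)
    (hαne : ∀ i, α i ≠ 0)
    (hroot : ∀ (h : H) (i : ι), ⁅(h : b), X i⁆ = α i h • X i)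
    (hSpan : ∀ x : b, ∃ (h : H) (c : ι → ℂ), x = (h : b) + ∑ i, c i • X i)
    (hIndep : ∀ (h : H) (c : ι → ℂ),
      (h : b) + ∑ i, c i • X i = 0 → h = 0 ∧ ∀ i, c i = 0)
    (hXX : ∀ i j k : ι, α k = α i + α j → ∃ c : ℂ, c ≠ 0 ∧ ⁅X i, X j⁆ = c • X k)
    (hXX0 : ∀ i j : ι, (¬∃ k, α k = α i + α j) → ⁅X i, X j⁆ = 0)
    (hGenRoots : ∀ j, j ∉ S → ∃ s ∈ S, ∃ j' : ι, α j = α s + α j')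
    (J : LieIdeal ℂ b) (RJ : Set ι)
    (hJ : (J : Submodule ℂ b) = ⨆ i ∈ RJ, ℂ ∙ X i)
    (i : ι) :
    (∃ K : LieIdeal ℂ (b ⧸ J),
        (K : Submodule ℂ (b ⧸ J)) = (ℂ ∙ (LieSubmodule.Quotient.mk' J (X i))) ∧
        Module.finrank ℂ K = 1 ∧
        (K : Submodule ℂ (b ⧸ J)) ≤
          Submodule.span ℂ (Set.range fun j => LieSubmodule.Quotient.mk' J (X j))) ↔
      (i ∉ RJ ∧ ∀ s ∈ S, (¬∃ k, α k = α s + α i) ∨ ∃ k ∈ RJ, α k = α s + α i) := by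
  have hli : LinearIndependent ℂ X :=
    Fintype.linearIndependent_iff.2 fun c hc => (hIndep 0 c (by simpa using hc)).2
  have hJspan : (J : Submodule ℂ b) = Submodule.span ℂ (X '' RJ) := by
    rw [hJ, Submodule.span_eq_iSup_of_singleton_spans, iSup_image]
  have hwf : WellFounded (RootStep α) := wellFounded_of_not_rootChain_self
    (RootChain.not_self hXne hXX hXX0
      (isNilpotent_ad_of_root_decomposition H hαne hroot hSpan hXX hXX0))
  have hmk : LieSubmodule.Quotient.mk' J (X i) ≠ 0 ↔ i ∉ RJ := by
    rw [Ne, LieSubmodule.Quotient.mk_eq_zero, ← LieSubmodule.mem_toSubmodule,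
      ← LieIdeal.toLieSubalgebra_toSubmodule, hJspan, hli.apply_mem_span_image_iff]
  rw [← hmk]
  constructor
  · rintro ⟨K, hK, hrank, -⟩
    change Module.finrank ℂ (K : Submodule ℂ (b ⧸ J)) = 1 at hrank
    rw [hK, finrank_span_singleton_eq_one_iff] at hrank
    exact ⟨hrank, fun s _ => root_condition_of_lie_mem hli hJspan hαne hXX
      ((exists_lieIdeal_eq_span_mk'_iff J (X i)).1 ⟨K, hK⟩ (X s))⟩
  · rintro ⟨h0, hcond⟩
    obtain ⟨K, hK⟩ := (exists_lieIdeal_eq_span_mk'_iff J (X i)).2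
      (lie_mem_of_root_condition H hroot hSpan hXX hXX0 hwf hGenRoots
        (fun k hk => hJspan ▸ Submodule.subset_span (Set.mem_image_of_mem X hk)) hcond)
    refine ⟨K, hK, ?_, ?_⟩
    · change Module.finrank ℂ (K : Submodule ℂ (b ⧸ J)) = 1
      rw [hK, finrank_span_singleton_eq_one_iff]
      exact h0
    · rw [hK, Submodule.span_singleton_le_iff_mem]
      exact Submodule.subset_span ⟨i, rfl⟩

/-- Let `J ⊊ b'` be an ideal of the Borel subalgebra `b` contained in
the derived algebra, with root set `R_J` (so `J = ⊕_{α∈R_J} g_α`).  Then the image of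
`ℂ·X_α` in `b/J` generates a 1-dimensional ideal of `b/J` contained in `b'/J` if and
only if `α ∈ R⁺ \ R_J` and for every simple root `a`, either `a + α` is not a root or
`a + α ∈ R_J`. -/
theorem one_dimensional_ideal_of_quotient_iff
    {b : Type*} [LieRing b] [LieAlgebra ℂ b] (H : LieSubalgebra ℂ b)
    {ι : Type*} [Fintype ι] (α : ι → (H →ₗ[ℂ] ℂ)) (X : ι → b)
    (S : Set ι)
    (hXne : ∀ i, X i ≠ 0)
    (hαne : ∀ i, α i ≠ 0)
    (hαinj : Function.Injective α)
    (hroot : ∀ (h : H) (i : ι), ⁅(h : b), X i⁆ = α i h • X i)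
    (hAb : ∀ x y : H, ⁅(x : b), (y : b)⁆ = 0)
    (hSep : ∀ h : H, (∀ i, α i h = 0) → h = 0)
    (hSpan : ∀ x : b, ∃ (h : H) (c : ι → ℂ), x = (h : b) + ∑ i, c i • X i)
    (hIndep : ∀ (h : H) (c : ι → ℂ),
      (h : b) + ∑ i, c i • X i = 0 → h = 0 ∧ ∀ i, c i = 0)
    (hXX : ∀ i j k : ι, α k = α i + α j → ∃ c : ℂ, c ≠ 0 ∧ ⁅X i, X j⁆ = c • X k)
    (hXX0 : ∀ i j : ι, (¬∃ k, α k = α i + α j) → ⁅X i, X j⁆ = 0)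
    (hGenRoots : ∀ j, j ∉ S → ∃ s ∈ S, ∃ j' : ι, α j = α s + α j')
    (J : LieIdeal ℂ b) (RJ : Set ι)
    (hJ : (J : Submodule ℂ b) = ⨆ i ∈ RJ, ℂ ∙ X i)
    (hJne : (J : Submodule ℂ b) ≠ Submodule.span ℂ (Set.range X))
    (i : ι) :
    (∃ K : LieIdeal ℂ (b ⧸ J),
        (K : Submodule ℂ (b ⧸ J)) = (ℂ ∙ (LieSubmodule.Quotient.mk' J (X i))) ∧
        Module.finrank ℂ K = 1 ∧
        (K : Submodule ℂ (b ⧸ J)) ≤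
          Submodule.span ℂ (Set.range fun j => LieSubmodule.Quotient.mk' J (X j))) ↔
      (i ∉ RJ ∧ ∀ s ∈ S, (¬∃ k, α k = α s + α i) ∨ ∃ k ∈ RJ, α k = α s + α i) :=
  one_dimensional_ideal_of_quotient_iff_general H α X S hXne hαne hroot hSpan hIndep hXX hXX0
    hGenRoots J RJ hJ i
end

section
/- Let J ⊊ b' be an ideal of the Borel subalgebra b with root set R_J ⊆ R⁺. Then the center of the quotient b/J is contained in the image of the Cartan subalgebra h; in particular Z(b/J) ∩ (b'/J) = 0. -/
/-- Let `J ⊊ b'` be an ideal of the Borel subalgebra `b` with root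
set `R_J ⊆ R⁺` (so `J = ⊕_{α∈R_J} g_α`).  Then the center of the quotient `b/J` is
contained in the image of the Cartan subalgebra `h`; in particular
`Z(b/J) ∩ (b'/J) = 0`. -/
theorem center_of_quotient_in_cartan_image
    {b : Type*} [LieRing b] [LieAlgebra ℂ b] (H : LieSubalgebra ℂ b)
    {ι : Type*} [Fintype ι] (α : ι → (H →ₗ[ℂ] ℂ)) (X : ι → b)
    (hXne : ∀ i, X i ≠ 0)
    (hαne : ∀ i, α i ≠ 0)
    (hαinj : Function.Injective α)
    (hroot : ∀ (h : H) (i : ι), ⁅(h : b), X i⁆ = α i h • X i)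
    (hAb : ∀ x y : H, ⁅(x : b), (y : b)⁆ = 0)
    (hSep : ∀ h : H, (∀ i, α i h = 0) → h = 0)
    (hSpan : ∀ x : b, ∃ (h : H) (c : ι → ℂ), x = (h : b) + ∑ i, c i • X i)
    (hIndep : ∀ (h : H) (c : ι → ℂ),
      (h : b) + ∑ i, c i • X i = 0 → h = 0 ∧ ∀ i, c i = 0)
    (J : LieIdeal ℂ b) (RJ : Set ι)
    (hJ : (J : Submodule ℂ b) = ⨆ i ∈ RJ, ℂ ∙ X i)
    (hJne : (J : Submodule ℂ b) ≠ Submodule.span ℂ (Set.range X)) :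
    ((LieAlgebra.center ℂ (b ⧸ J) : Submodule ℂ (b ⧸ J)) ≤
        Submodule.span ℂ (Set.range fun h : H => LieSubmodule.Quotient.mk' J (h : b))) ∧
      (LieAlgebra.center ℂ (b ⧸ J) : Submodule ℂ (b ⧸ J)) ⊓
          Submodule.span ℂ (Set.range fun i => LieSubmodule.Quotient.mk' J (X i)) = ⊥ := by
  classical
  -- Y is the family of root vectors in `J` (others replaced by 0).
  set Y : ι → b := fun i => if i ∈ RJ then X i else 0 with hY
  have hJ' : (J : Submodule ℂ b) = Submodule.span ℂ (Set.range Y) := by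
    rw [hJ]
    apply le_antisymm
    · refine iSup₂_le fun i hi => ?_
      rw [Submodule.span_singleton_le_iff_mem]
      exact Submodule.subset_span ⟨i, by simp [hY, hi]⟩
    · rw [Submodule.span_le]
      rintro _ ⟨i, rfl⟩
      by_cases hi : i ∈ RJ
      · simp only [hY, if_pos hi]
        exact le_iSup₂ (f := fun i _ => ℂ ∙ X i) i hi (Submodule.mem_span_singleton_self _)
      · simp [hY, hi]
  -- membership in J in terms of coordinates
  have hJmem : ∀ e : ι → ℂ, (∀ i, i ∉ RJ → e i = 0) → (∑ i, e i • X i) ∈ J := by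
    intro e he
    have : ∀ i ∈ Finset.univ, e i • X i ∈ (J : Submodule ℂ b) := by
      intro i _
      by_cases hi : i ∈ RJ
      · refine Submodule.smul_mem _ _ ?_
        rw [hJ']
        exact Submodule.subset_span ⟨i, by simp [hY, hi]⟩
      · simp [he i hi]
    exact Submodule.sum_mem _ this
  have hmemJ : ∀ x : b, x ∈ J → ∃ e : ι → ℂ,
      x = ∑ i, e i • X i ∧ ∀ i, i ∉ RJ → e i = 0 := by
    intro x hx
    have hx' : x ∈ Submodule.span ℂ (Set.range Y) := by rw [← hJ']; exact hx
    obtain ⟨c, hc⟩ := (Submodule.mem_span_range_iff_exists_fun ℂ).mp hx'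
    refine ⟨fun i => if i ∈ RJ then c i else 0, ?_, fun i hi => by simp [hi]⟩
    rw [← hc]
    refine Finset.sum_congr rfl fun i _ => ?_
    by_cases hi : i ∈ RJ <;> simp [hY, hi]
  -- Part 1
  have part1 : (LieAlgebra.center ℂ (b ⧸ J) : Submodule ℂ (b ⧸ J)) ≤
      Submodule.span ℂ (Set.range fun h : H => LieSubmodule.Quotient.mk' J (h : b)) := by
    intro z hz
    obtain ⟨x, rfl⟩ := LieSubmodule.Quotient.surjective_mk' (N := J) z
    obtain ⟨h, c, rfl⟩ := hSpan x
    have hcent : ∀ w : b ⧸ J, ⁅w, LieSubmodule.Quotient.mk' J ((h : b) + ∑ i, c i • X i)⁆ = 0 := by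
      exact (LieModule.mem_maxTrivSubmodule ℂ (b ⧸ J) (b ⧸ J) _).mp hz
    -- bracket with elements of H
    have key : ∀ h' : H, (∑ i, (c i * α i h') • X i) ∈ J := by
      intro h'
      have h1 : ⁅(h' : b), (h : b) + ∑ i, c i • X i⁆ ∈ J := by
        have h2 := hcent (LieSubmodule.Quotient.mk' J (h' : b))
        have h3 : LieSubmodule.Quotient.mk' J ⁅(h' : b), (h : b) + ∑ i, c i • X i⁆ = 0 := h2
        exact (LieSubmodule.Quotient.mk_eq_zero' (N := J)).mp h3
      have h4 : ⁅(h' : b), (h : b) + ∑ i, c i • X i⁆ = ∑ i, (c i * α i h') • X i := by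
        rw [lie_add, hAb h' h, zero_add]
        have hlin := map_sum (LieModule.toEnd ℂ b b (h' : b)) (fun i => c i • X i) Finset.univ
        simp only [LieModule.toEnd_apply_apply] at hlin
        rw [hlin]
        refine Finset.sum_congr rfl fun i _ => ?_
        rw [lie_smul, hroot h' i, smul_smul]
      rwa [h4] at h1
    have hc0 : ∀ i, i ∉ RJ → c i = 0 := by
      intro i hi
      obtain ⟨h', hh'⟩ : ∃ h' : H, α i h' ≠ 0 := by
        by_contra hcon
        push_neg at hcon
        exact hαne i (by ext h'; simpa using hcon h')
      have h5 := key h'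
      obtain ⟨e, he1, he2⟩ := hmemJ _ h5
      have h6 : ((0 : H) : b) + ∑ j, (e j - c j * α j h') • X j = 0 := by
        simp only [ZeroMemClass.coe_zero, zero_add, sub_smul, Finset.sum_sub_distrib, ← he1,
          sub_self]
      have h7 := (hIndep 0 _ h6).2 i
      have h8 : e i = c i * α i h' := by linear_combination h7
      have h9 : c i * α i h' = 0 := by rw [← h8, he2 i hi]
      exact (mul_eq_zero.mp h9).resolve_right hh'
    have hsumJ : (∑ i, c i • X i) ∈ J := hJmem c hc0
    have h10 : LieSubmodule.Quotient.mk' J ((h : b) + ∑ i, c i • X i) =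
        LieSubmodule.Quotient.mk' J (h : b) := by
      have hadd := map_add (LieSubmodule.Quotient.mk' J).toLinearMap (h : b) (∑ i, c i • X i)
      have hz0 : LieSubmodule.Quotient.mk' J (∑ i, c i • X i) = 0 :=
        (LieSubmodule.Quotient.mk_eq_zero' (N := J)).mpr hsumJ
      rw [show LieSubmodule.Quotient.mk' J ((h : b) + ∑ i, c i • X i) =
          LieSubmodule.Quotient.mk' J (h : b) +
            LieSubmodule.Quotient.mk' J (∑ i, c i • X i) from hadd, hz0, add_zero]
    rw [h10]
    exact Submodule.subset_span ⟨h, rfl⟩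
  refine ⟨part1, ?_⟩
  -- Part 2
  rw [eq_bot_iff]
  rintro z ⟨hz1, hz2⟩
  have hzH := part1 hz1
  -- z is the image of an element of H
  have hzH' : ∃ h : H, LieSubmodule.Quotient.mk' J (h : b) = z := by
    let G : H →ₗ[ℂ] b ⧸ J :=
      (LieSubmodule.Quotient.mk' J : b →ₗ⁅ℂ,b⁆ b ⧸ J).toLinearMap.comp H.subtype
    have hrange : (Set.range fun h : H => LieSubmodule.Quotient.mk' J (h : b)) =
        ↑(LinearMap.range G) := by
      ext w
      constructor
      · rintro ⟨a, rfl⟩; exact ⟨a, rfl⟩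
      · rintro ⟨a, rfl⟩; exact ⟨a, rfl⟩
    rw [hrange, Submodule.span_eq] at hzH
    obtain ⟨h, hh⟩ := hzH
    exact ⟨h, hh⟩
  obtain ⟨h, rfl⟩ := hzH'
  -- z is also in the span of the images of the X i
  obtain ⟨c, hc⟩ := (Submodule.mem_span_range_iff_exists_fun ℂ).mp hz2
  have hc' : LieSubmodule.Quotient.mk' J (∑ i, c i • X i) =
      LieSubmodule.Quotient.mk' J (h : b) := by
    calc LieSubmodule.Quotient.mk' J (∑ i, c i • X i)
        = ∑ i, LieSubmodule.Quotient.mk' J (c i • X i) :=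
          map_sum (LieSubmodule.Quotient.mk' J).toLinearMap _ _
      _ = ∑ i, c i • LieSubmodule.Quotient.mk' J (X i) :=
          Finset.sum_congr rfl fun i _ =>
            map_smul (LieSubmodule.Quotient.mk' J).toLinearMap _ _
      _ = LieSubmodule.Quotient.mk' J (h : b) := hc
  have hmem : ((h : b) - ∑ i, c i • X i) ∈ J := by
    have : LieSubmodule.Quotient.mk' J ((h : b) - ∑ i, c i • X i) = 0 := by
      rw [show LieSubmodule.Quotient.mk' J ((h : b) - ∑ i, c i • X i) =
          LieSubmodule.Quotient.mk' J (h : b) -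
            LieSubmodule.Quotient.mk' J (∑ i, c i • X i) from
          map_sub (LieSubmodule.Quotient.mk' J).toLinearMap _ _, hc', sub_self]
    exact (LieSubmodule.Quotient.mk_eq_zero' (N := J)).mp this
  obtain ⟨e, he1, -⟩ := hmemJ _ hmem
  have hsum : (h : b) = ∑ i, (c i + e i) • X i := by
    rw [sub_eq_iff_eq_add] at he1
    rw [he1, ← Finset.sum_add_distrib]
    exact Finset.sum_congr rfl fun i _ => by rw [add_smul, add_comm]
  have h6 : (h : b) + ∑ i, (-(c i + e i)) • X i = 0 := by
    rw [hsum, ← Finset.sum_add_distrib]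
    refine Finset.sum_eq_zero fun i _ => ?_
    rw [← add_smul]
    have : c i + e i + -(c i + e i) = 0 := by ring
    rw [this, zero_smul]
  have h7 := (hIndep h _ h6).1
  rw [h7]
  simp
end

section
/- Every ideal J of the Borel subalgebra b decomposes as J = S + (J ∩ b'), where S = J ∩ h is a subspace of the Cartan subalgebra contained in ⋂_{β ∈ R⁺ \ R_J} ker(β), with R_J the set of roots α such that g_α ⊆ J. -/
section aux

variable {b : Type*} [LieRing b] [LieAlgebra ℂ b] {H : LieSubalgebra ℂ b}
  {ι : Type*} [Fintype ι] [DecidableEq ι] {α : ι → (H →ₗ[ℂ] ℂ)} {X : ι → b}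

theorem step_lemma
    (hroot : ∀ (h : H) (i : ι), ⁅(h : b), X i⁆ = α i h • X i)
    (hAb : ∀ x y : H, ⁅(x : b), (y : b)⁆ = 0)
    (J : LieIdeal ℂ b) (k : H) (d : ℂ) (h : H) (c : ι → ℂ)
    (hw : (h : b) + ∑ i, c i • X i ∈ J) :
    (((-d) • h : H) : b) + ∑ i, ((α i k - d) * c i) • X i ∈ J := by
  have h1 : ⁅(k : b), (h : b) + ∑ i, c i • X i⁆ - d • ((h : b) + ∑ i, c i • X i) ∈ J :=
    J.sub_mem (J.lie_mem hw) (J.smul_mem d hw)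
  have e : (((-d) • h : H) : b) + ∑ i, ((α i k - d) * c i) • X i
      = ⁅(k : b), (h : b) + ∑ i, c i • X i⁆ - d • ((h : b) + ∑ i, c i • X i) := by
    have hsum : ⁅(k : b), ∑ i, c i • X i⁆ = ∑ i, ⁅(k : b), c i • X i⁆ := by
      simpa only [LieAlgebra.ad_apply] using map_sum (LieAlgebra.ad ℂ b (k : b)) (fun i => c i • X i) Finset.univ
    rw [lie_add, hAb k h, zero_add, hsum, smul_add, Finset.smul_sum]
    have e2 : ∀ i : ι, ⁅(k:b), c i • X i⁆ = (α i k * c i) • X i := fun i => by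
      rw [lie_smul, hroot k i, smul_smul, mul_comm]
    simp_rw [e2, sub_mul, sub_smul, Finset.sum_sub_distrib, smul_smul]
    have hc : ∀ (e : ℂ) (y : H), ((e • y : H) : b) = e • (y : b) := fun _ _ => rfl
    rw [hc]
    push_cast [neg_smul]
    abel
  rw [e]; exact h1


theorem iterate_lemma
    (hαinj : Function.Injective α)
    (hroot : ∀ (h : H) (i : ι), ⁅(h : b), X i⁆ = α i h • X i)
    (hAb : ∀ x y : H, ⁅(x : b), (y : b)⁆ = 0)
    (J : LieIdeal ℂ b) (h : H) (c : ι → ℂ)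
    (hw : (h : b) + ∑ i, c i • X i ∈ J) (i0 : ι) :
    ∀ t : Finset ι, i0 ∉ t → ∃ (h' : H) (g : ι → ℂ), g i0 ≠ 0 ∧ (∀ j ∈ t, g j = 0) ∧
      ((h' : b) + ∑ i, (g i * c i) • X i ∈ J) := by
  intro t
  induction t using Finset.induction_on with
  | empty =>
    intro _
    exact ⟨h, fun _ => 1, one_ne_zero, fun j hj => absurd hj (Finset.notMem_empty j),
      by simpa using hw⟩
  | @insert j t' hj ih =>
    intro hi0
    have hi0j : i0 ≠ j := fun e => hi0 (by simp [e])
    have hi0t' : i0 ∉ t' := fun e => hi0 (Finset.mem_insert_of_mem e)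
    obtain ⟨h', g, hg0, hgt, hmem⟩ := ih hi0t'
    have hne : α i0 ≠ α j := fun e => hi0j (hαinj e)
    obtain ⟨k, hk⟩ : ∃ k : H, α i0 k ≠ α j k := by
      by_contra hcon
      push_neg at hcon
      exact hne (LinearMap.ext hcon)
    refine ⟨(-(α j k)) • h', fun i => (α i k - α j k) * g i,
      mul_ne_zero (sub_ne_zero.mpr hk) hg0, ?_, ?_⟩
    · intro j' hj'
      rcases Finset.mem_insert.mp hj' with rfl | hjt'
      · simp
      · simp [hgt j' hjt']
    · have := step_lemma hroot hAb J k (α j k) h' (fun i => g i * c i) hmem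
      simpa [mul_assoc] using this

theorem component_mem
    (hαne : ∀ i, α i ≠ 0)
    (hαinj : Function.Injective α)
    (hroot : ∀ (h : H) (i : ι), ⁅(h : b), X i⁆ = α i h • X i)
    (hAb : ∀ x y : H, ⁅(x : b), (y : b)⁆ = 0)
    (J : LieIdeal ℂ b) (h : H) (c : ι → ℂ)
    (hw : (h : b) + ∑ i, c i • X i ∈ J) (i0 : ι) :
    c i0 • X i0 ∈ J := by
  obtain ⟨h', g, hg0, hgt, hmem⟩ := iterate_lemma hαinj hroot hAb J h c hw i0
    (Finset.univ.erase i0) (by simp)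
  obtain ⟨k0, hk0⟩ : ∃ k : H, α i0 k ≠ 0 := by
    by_contra hcon
    push_neg at hcon
    exact hαne i0 (LinearMap.ext hcon)
  have hmem2 := step_lemma hroot hAb J k0 0 h' (fun i => g i * c i) hmem
  have hz : ∀ i, i ≠ i0 → ((α i k0 - 0) * (g i * c i)) • X i = 0 := by
    intro i hi
    rw [hgt i (by simp [hi])]
    simp
  rw [Finset.sum_eq_single i0 (fun i _ hi => hz i hi) (by simp)] at hmem2
  simp only [neg_zero, zero_smul, sub_zero] at hmem2
  have : ((0 : H) : b) + (α i0 k0 * (g i0 * c i0)) • X i0 = (α i0 k0 * g i0) • (c i0 • X i0) := by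
    simp [smul_smul, mul_assoc]
  rw [this] at hmem2
  have hmul : (α i0 k0 * g i0) ≠ 0 := mul_ne_zero hk0 hg0
  have := J.smul_mem (α i0 k0 * g i0)⁻¹ hmem2
  rwa [smul_smul, inv_mul_cancel₀ hmul, one_smul] at this

end aux

/-- Every ideal `J` of the Borel subalgebra `b` decomposes as
`J = S + (J ∩ b')`, where `S = J ∩ h` is a subspace of the Cartan subalgebra contained
in `⋂_{β ∈ R⁺ \ R_J} ker β`, with `R_J` the set of roots `α` such that `g_α ⊆ J`. -/
theorem ideal_decomposition_cartan_part
    {b : Type*} [LieRing b] [LieAlgebra ℂ b] (H : LieSubalgebra ℂ b)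
    {ι : Type*} [Fintype ι] (α : ι → (H →ₗ[ℂ] ℂ)) (X : ι → b)
    (hXne : ∀ i, X i ≠ 0)
    (hαne : ∀ i, α i ≠ 0)
    (hαinj : Function.Injective α)
    (hroot : ∀ (h : H) (i : ι), ⁅(h : b), X i⁆ = α i h • X i)
    (hAb : ∀ x y : H, ⁅(x : b), (y : b)⁆ = 0)
    (hSep : ∀ h : H, (∀ i, α i h = 0) → h = 0)
    (hSpan : ∀ x : b, ∃ (h : H) (c : ι → ℂ), x = (h : b) + ∑ i, c i • X i)
    (hIndep : ∀ (h : H) (c : ι → ℂ),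
      (h : b) + ∑ i, c i • X i = 0 → h = 0 ∧ ∀ i, c i = 0)
    (J : LieIdeal ℂ b) :
    (J : Submodule ℂ b) =
        ((J : Submodule ℂ b) ⊓ H.toSubmodule) ⊔
          ((J : Submodule ℂ b) ⊓ Submodule.span ℂ (Set.range X)) ∧
      ∀ h : H, (h : b) ∈ J → ∀ i : ι, i ∉ {i : ι | X i ∈ J} → α i h = 0 := by
  classical
  constructor
  · apply le_antisymm
    · intro x hx
      obtain ⟨h, c, rfl⟩ := hSpan x
      have hxJ : (h : b) + ∑ i, c i • X i ∈ J := hx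
      have hcomp : ∀ i, c i • X i ∈ J :=
        fun i => component_mem hαne hαinj hroot hAb J h c hxJ i
      have hsumJ : ∑ i, c i • X i ∈ J := by
        exact Submodule.sum_mem _ (fun i _ => hcomp i)
      have hhJ : (h : b) ∈ J := by
        have := J.sub_mem hxJ hsumJ
        simpa using this
      have hspan : ∑ i, c i • X i ∈ Submodule.span ℂ (Set.range X) :=
        Submodule.sum_mem _ fun i _ =>
          Submodule.smul_mem _ _ (Submodule.subset_span ⟨i, rfl⟩)
      exact Submodule.add_mem_sup ⟨hhJ, h.2⟩ ⟨hsumJ, hspan⟩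
    · exact sup_le inf_le_left inf_le_left
  · intro h hh i hi
    have h1 : ⁅X i, (h : b)⁆ ∈ J := J.lie_mem hh
    have h2 : α i h • X i ∈ J := by
      have : α i h • X i = -⁅X i, (h : b)⁆ := by
        rw [← lie_skew, hroot h i, neg_neg]
      rw [this]
      exact J.neg_mem h1
    by_contra hne
    apply hi
    have := J.smul_mem (α i h)⁻¹ h2
    rw [smul_smul, inv_mul_cancel₀ hne, one_smul] at this
    exact this
end
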